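/- Let Γ be a closed subgroup of O(m) whose identity component acts nontrivially on ℝᵐ. Then the quotient metric space S^{m-1}/Γ has radius at most π/2; that is, there is a point q ∈ S^{m-1}/Γ such that every point of S^{m-1}/Γ is within distance π/2 of q. In particular the quotient cone ℝᵐ/Γ is not isometric to any Euclidean space. -/
import Mathlib


noncomputable section

open scoped BigOperators RealInnerProductSpace Topology

lemma key_lemma {m : ℕ}
    (g : EuclideanSpace ℝ (Fin m) ≃ₗᵢ[ℝ] EuclideanSpace ℝ (Fin m)) (hg : g ≠ 1) :
    ∃ v : EuclideanSpace ℝ (Fin m), ‖v‖ = 1 ∧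
      ∀ y : EuclideanSpace ℝ (Fin m), ∀ ε : ℝ, 0 < ε → ∃ n : ℕ, -ε ≤ ⟪v, (g ^ n) y⟫ := by
  set V := EuclideanSpace ℝ (Fin m)
  set T : V →ₗ[ℝ] V := (g.toLinearEquiv : V →ₗ[ℝ] V) with hT
  have hTapp : ∀ x : V, T x = g x := fun x => rfl
  set F : Submodule ℝ V := LinearMap.ker (T - LinearMap.id) with hF
  have hmemF : ∀ x : V, x ∈ F ↔ g x = x := by
    intro x
    simp [hF, LinearMap.mem_ker, LinearMap.sub_apply, sub_eq_zero, hTapp]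
  have hFne : F ≠ ⊤ := by
    intro h
    refine hg (LinearIsometryEquiv.ext fun x => ?_)
    have := (hmemF x).1 (h ▸ Submodule.mem_top)
    simpa using this
  have hFbot : Fᗮ ≠ ⊥ := by
    intro h
    exact hFne ((Submodule.orthogonal_eq_bot_iff).1 h)
  obtain ⟨u, huF, hune⟩ := Submodule.exists_mem_ne_zero_of_ne_bot hFbot
  refine ⟨‖u‖⁻¹ • u, norm_smul_inv_norm hune, ?_⟩
  have hvF : (‖u‖⁻¹ • u) ∈ Fᗮ := Submodule.smul_mem _ _ huF
  set v : V := ‖u‖⁻¹ • u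
  have hvperp : ∀ w ∈ F, ⟪v, w⟫ = 0 := by
    intro w hw
    rw [real_inner_comm]
    exact (Submodule.mem_orthogonal F v).1 hvF w hw
  intro y ε hε
  by_contra hcon
  push_neg at hcon
  -- Cesàro averages
  set w : ℕ → V := fun N => (N : ℝ)⁻¹ • ∑ n ∈ Finset.range N, (g ^ n) y with hw
  have hnormpow : ∀ n : ℕ, ‖(g ^ n) y‖ = ‖y‖ := fun n => (g ^ n).norm_map y
  have hbound : ∀ N : ℕ, ‖w N‖ ≤ ‖y‖ := by
    intro N
    rcases Nat.eq_zero_or_pos N with h0 | hpos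
    · simp [hw, h0, norm_nonneg]
    have : ‖∑ n ∈ Finset.range N, (g ^ n) y‖ ≤ N * ‖y‖ := by
      calc ‖∑ n ∈ Finset.range N, (g ^ n) y‖ ≤ ∑ n ∈ Finset.range N, ‖(g ^ n) y‖ :=
            norm_sum_le _ _
        _ = N * ‖y‖ := by simp [hnormpow]
    rw [hw]
    simp only [norm_smul, norm_inv, Real.norm_natCast]
    rw [inv_mul_le_iff₀ (by positivity)]
    simpa using this
  have hinner : ∀ N : ℕ, 1 ≤ N → ⟪v, w N⟫ ≤ -ε := by
    intro N hN
    have hNpos : (0:ℝ) < N := by exact_mod_cast hN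
    have : ⟪v, ∑ n ∈ Finset.range N, (g ^ n) y⟫ ≤ N * (-ε) := by
      rw [inner_sum]
      calc ∑ n ∈ Finset.range N, ⟪v, (g ^ n) y⟫ ≤ ∑ n ∈ Finset.range N, (-ε) :=
            Finset.sum_le_sum (fun n _ => (hcon n).le)
        _ = N * (-ε) := by simp [mul_comm]
    rw [hw]
    simp only [inner_smul_right]
    calc (N:ℝ)⁻¹ * ⟪v, ∑ n ∈ Finset.range N, (g ^ n) y⟫ ≤ (N:ℝ)⁻¹ * (N * (-ε)) := by
          apply mul_le_mul_of_nonneg_left this (by positivity)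
      _ = -ε := by field_simp
  have hgw : ∀ N : ℕ, g (w N) - w N = (N : ℝ)⁻¹ • ((g ^ N) y - y) := by
    intro N
    rw [hw]
    rw [g.map_smul, ← smul_sub]
    congr 1
    rw [map_sum]
    have : ∀ n, g ((g ^ n) y) = (g ^ (n+1)) y := by
      intro n
      rw [pow_succ']
      rfl
    simp only [this]
    rw [← Finset.sum_sub_distrib, Finset.sum_range_sub (fun n => (g ^ n) y)]
    simp
  have hgwnorm : ∀ N : ℕ, ‖g (w N) - w N‖ ≤ 2 * ‖y‖ / N := by
    intro N
    rw [hgw N]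
    rw [norm_smul, norm_inv, Real.norm_natCast, div_eq_inv_mul]
    rcases Nat.eq_zero_or_pos N with h0 | hpos
    · simp [h0]
    apply mul_le_mul_of_nonneg_left _ (by positivity)
    calc ‖(g ^ N) y - y‖ ≤ ‖(g ^ N) y‖ + ‖y‖ := norm_sub_le _ _
      _ = 2 * ‖y‖ := by rw [hnormpow]; ring
  -- compactness
  have hmem : ∀ N, w N ∈ Metric.closedBall (0 : V) ‖y‖ := by
    intro N; simpa [Metric.mem_closedBall, dist_zero_right] using hbound N
  obtain ⟨L, hLmem, φ, hφ, hL⟩ :=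
    (isCompact_closedBall (0 : V) ‖y‖).tendsto_subseq hmem
  have hφtop : Filter.Tendsto φ Filter.atTop Filter.atTop := hφ.tendsto_atTop
  -- g L = L
  have h1 : Filter.Tendsto (fun k => g (w (φ k)) - w (φ k)) Filter.atTop (𝓝 (g L - L)) :=
    ((g.continuous.tendsto L).comp hL).sub hL
  have h2 : Filter.Tendsto (fun k => g (w (φ k)) - w (φ k)) Filter.atTop (𝓝 0) := by
    apply squeeze_zero_norm (fun k => hgwnorm (φ k))
    have := (tendsto_const_div_atTop_nhds_zero_nat (2 * ‖y‖)).comp hφtop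
    exact this
  have hgL : g L = L := by
    have := tendsto_nhds_unique h1 h2
    rwa [sub_eq_zero] at this
  have hLF : L ∈ F := (hmemF L).2 hgL
  have hvL : ⟪v, L⟫ = 0 := hvperp L hLF
  have : ⟪v, L⟫ ≤ -ε := by
    have htend : Filter.Tendsto (fun k => ⟪v, w (φ k)⟫) Filter.atTop (𝓝 ⟪v, L⟫) :=
      (Filter.Tendsto.inner tendsto_const_nhds hL)
    apply le_of_tendsto htend
    filter_upwards [Filter.eventually_atTop.2 ⟨1, fun k hk => hk⟩] with k hk
    exact hinner (φ k) (le_trans hk (hφ.le_apply))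
  linarith


/-- let `Γ` be a closed subgroup of `O(m)` whose identity component acts
nontrivially on `ℝᵐ`.  Then the quotient `S^{m-1}/Γ` (with the quotient of the round
metric) has radius at most `π/2`: there is a point `q` such that every point is within
distance `π/2` of `q`.  In particular the quotient cone `ℝᵐ/Γ` is not isometric to any
Euclidean space. -/
theorem stmt2 (m : ℕ) (hm : 1 ≤ m)
    (Γ : Subgroup ((EuclideanSpace ℝ (Fin m)) ≃ₗᵢ[ℝ] (EuclideanSpace ℝ (Fin m))))
    -- `Γ` is closed (in the topology of pointwise convergence on maps `ℝᵐ → ℝᵐ`):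
    (hclosed : IsClosed {f : EuclideanSpace ℝ (Fin m) → EuclideanSpace ℝ (Fin m) |
      ∃ g : Γ, ⇑(g : (EuclideanSpace ℝ (Fin m)) ≃ₗᵢ[ℝ] (EuclideanSpace ℝ (Fin m))) = f})
    -- the identity component of `Γ` acts nontrivially on `ℝᵐ`: there is a nontrivial
    -- element of `Γ` lying in the connected component of the identity:
    (hid : ∃ g : Γ,
      (⇑(g : (EuclideanSpace ℝ (Fin m)) ≃ₗᵢ[ℝ] (EuclideanSpace ℝ (Fin m)))
          : EuclideanSpace ℝ (Fin m) → EuclideanSpace ℝ (Fin m))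
        ∈ connectedComponentIn
          {f : EuclideanSpace ℝ (Fin m) → EuclideanSpace ℝ (Fin m) |
            ∃ g' : Γ, ⇑(g' : (EuclideanSpace ℝ (Fin m)) ≃ₗᵢ[ℝ] (EuclideanSpace ℝ (Fin m))) = f}
          (id : EuclideanSpace ℝ (Fin m) → EuclideanSpace ℝ (Fin m)) ∧
      ((g : Γ) : (EuclideanSpace ℝ (Fin m)) ≃ₗᵢ[ℝ] (EuclideanSpace ℝ (Fin m))) ≠ 1)
    -- the quotient `S = S^{m-1}/Γ` of the round sphere (geodesic distance
    -- `d(x,y) = arccos⟨x,y⟩`):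
    (S : Type*) [MetricSpace S]
    (πS : Metric.sphere (0 : EuclideanSpace ℝ (Fin m)) 1 → S)
    (hπSsurj : Function.Surjective πS)
    (hπS : ∀ x y : Metric.sphere (0 : EuclideanSpace ℝ (Fin m)) 1, dist (πS x) (πS y)
      = ⨅ g : Γ, Real.arccos
          ⟪(x : EuclideanSpace ℝ (Fin m)),
            ((g : (EuclideanSpace ℝ (Fin m)) ≃ₗᵢ[ℝ] (EuclideanSpace ℝ (Fin m)))
              (y : EuclideanSpace ℝ (Fin m)))⟫)
    -- the quotient metric space `Q = ℝᵐ/Γ`: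
    (Q : Type*) [MetricSpace Q] (π : EuclideanSpace ℝ (Fin m) → Q)
    (hπsurj : Function.Surjective π)
    (hπ : ∀ x y : EuclideanSpace ℝ (Fin m), dist (π x) (π y)
      = ⨅ g : Γ, dist x
          ((g : (EuclideanSpace ℝ (Fin m)) ≃ₗᵢ[ℝ] (EuclideanSpace ℝ (Fin m))) y)) :
    -- the quotient sphere has radius at most `π/2`:
    (∃ q : S, ∀ x : S, dist q x ≤ Real.pi / 2) ∧
    -- in particular `ℝᵐ/Γ` is not isometric to any Euclidean space:
    (∀ k : ℕ, ¬ Nonempty (Q ≃ᵢ EuclideanSpace ℝ (Fin k))) := by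
  haveI : Nonempty Γ := ⟨1⟩
  obtain ⟨gΓ, -, hgne⟩ := hid
  set g0 : (EuclideanSpace ℝ (Fin m)) ≃ₗᵢ[ℝ] (EuclideanSpace ℝ (Fin m)) := (gΓ : (EuclideanSpace ℝ (Fin m)) ≃ₗᵢ[ℝ] (EuclideanSpace ℝ (Fin m))) with hg0
  obtain ⟨v, hv1, hkey⟩ := key_lemma g0 hgne
  have helt : ∀ n : ℕ, ∃ h : Γ,
      (h : (EuclideanSpace ℝ (Fin m)) ≃ₗᵢ[ℝ] (EuclideanSpace ℝ (Fin m))) = g0 ^ n :=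
    fun n => ⟨⟨g0 ^ n, pow_mem gΓ.2 n⟩, rfl⟩
  constructor
  · -- radius of the quotient sphere
    have hvs : v ∈ Metric.sphere (0 : EuclideanSpace ℝ (Fin m)) 1 := by
      simpa [mem_sphere_zero_iff_norm] using hv1
    refine ⟨πS ⟨v, hvs⟩, ?_⟩
    intro x
    obtain ⟨w, rfl⟩ := hπSsurj x
    rw [hπS]
    apply le_of_forall_pos_le_add
    intro ε hε
    have hc : Filter.Tendsto Real.arccos (𝓝 0) (𝓝 (Real.pi / 2)) := by
      simpa [Real.arccos_zero] using Real.continuous_arccos.tendsto 0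
    rw [Metric.tendsto_nhds_nhds] at hc
    obtain ⟨δ, hδpos, hδ⟩ := hc ε hε
    obtain ⟨n, hn⟩ := hkey (w : EuclideanSpace ℝ (Fin m)) (δ / 2) (by positivity)
    obtain ⟨h, hh⟩ := helt n
    have hbdd : BddBelow (Set.range fun g : Γ => Real.arccos
        ⟪(v : EuclideanSpace ℝ (Fin m)),
          ((g : (EuclideanSpace ℝ (Fin m)) ≃ₗᵢ[ℝ] (EuclideanSpace ℝ (Fin m)))
            (w : EuclideanSpace ℝ (Fin m)))⟫) := by
      refine ⟨0, ?_⟩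
      rintro _ ⟨g, rfl⟩
      exact Real.arccos_nonneg _
    have hle := ciInf_le hbdd h
    rw [hh] at hle
    refine le_trans hle ?_
    set t : ℝ := ⟪v, (g0 ^ n) (w : EuclideanSpace ℝ (Fin m))⟫ with ht
    rcases le_or_gt 0 t with h0 | h0
    · have : Real.arccos t ≤ Real.pi / 2 := Real.arccos_le_pi_div_two.2 h0
      linarith
    · have habs : dist t 0 < δ := by
        rw [Real.dist_eq, sub_zero, abs_of_neg h0]
        linarith
      have := hδ habs
      rw [Real.dist_eq] at this
      have := abs_lt.1 this
      linarith [this.2]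
  · -- the cone is not Euclidean
    intro k ⟨e⟩
    have hdist0 : ∀ y : EuclideanSpace ℝ (Fin m), dist (π 0) (π y) = ‖y‖ := by
      intro y
      rw [hπ]
      have : (fun g : Γ => dist (0 : EuclideanSpace ℝ (Fin m))
          ((g : (EuclideanSpace ℝ (Fin m)) ≃ₗᵢ[ℝ] (EuclideanSpace ℝ (Fin m))) y))
          = fun _ : Γ => ‖y‖ := by
        funext g
        rw [dist_zero_left,
          (g : (EuclideanSpace ℝ (Fin m)) ≃ₗᵢ[ℝ] (EuclideanSpace ℝ (Fin m))).norm_map]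
      rw [this, ciInf_const]
    have hkey2 : ∀ y : EuclideanSpace ℝ (Fin m),
        dist (π v) (π y) ^ 2 ≤ 1 + ‖y‖ ^ 2 := by
      intro y
      have h1 : ∀ ε : ℝ, 0 < ε → dist (π v) (π y) ^ 2 ≤ (1 + ‖y‖ ^ 2) + ε := by
        intro ε hε
        obtain ⟨n, hn⟩ := hkey y (ε / 2) (by positivity)
        obtain ⟨h, hh⟩ := helt n
        have hbdd : BddBelow (Set.range fun g : Γ => dist v
            ((g : (EuclideanSpace ℝ (Fin m)) ≃ₗᵢ[ℝ] (EuclideanSpace ℝ (Fin m))) y)) := by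
          refine ⟨0, ?_⟩
          rintro _ ⟨g, rfl⟩
          exact dist_nonneg
        have hle : dist (π v) (π y) ≤ ‖v - (g0 ^ n) y‖ := by
          rw [hπ]
          have := ciInf_le hbdd h
          rwa [hh, dist_eq_norm] at this
        have hsq : ‖v - (g0 ^ n) y‖ ^ 2 = 1 + ‖y‖ ^ 2 - 2 * ⟪v, (g0 ^ n) y⟫ := by
          rw [@norm_sub_sq_real, hv1, (g0 ^ n).norm_map]
          ring
        nlinarith [dist_nonneg (x := π v) (y := π y), norm_nonneg (v - (g0 ^ n) y)]
      exact le_of_forall_pos_le_add h1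
    set o : EuclideanSpace ℝ (Fin k) := e (π 0) with ho
    set q : EuclideanSpace ℝ (Fin k) := e (π v) with hq
    have hoq : dist o q = 1 := by
      rw [ho, hq, e.dist_eq, hdist0 v, hv1]
    set z' : EuclideanSpace ℝ (Fin k) := (2 : ℝ) • o - q with hz'
    obtain ⟨y, hy⟩ := hπsurj (e.symm z')
    have hdoz : dist o z' = 1 := by
      rw [hz', dist_eq_norm]
      have : o - ((2 : ℝ) • o - q) = q - o := by
        rw [two_smul]; abel
      rw [this, ← dist_eq_norm, dist_comm]
      exact hoq
    have hdqz : dist q z' = 2 := by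
      rw [hz', dist_eq_norm]
      have : q - ((2 : ℝ) • o - q) = (2 : ℝ) • (q - o) := by
        rw [two_smul, two_smul]; abel
      rw [this, norm_smul]
      have : ‖q - o‖ = 1 := by rw [← dist_eq_norm, dist_comm]; exact hoq
      rw [this]
      norm_num
    have hyn : ‖y‖ = 1 := by
      rw [← hdist0 y]
      have : dist (π 0) (π y) = dist o z' := by
        rw [hy, ho]
        rw [show π 0 = e.symm o from by rw [ho, e.symm_apply_apply]]
        rw [e.symm.dist_eq, e.apply_symm_apply]
      rw [this, hdoz]
    have hvy : dist (π v) (π y) = 2 := by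
      have : dist (π v) (π y) = dist q z' := by
        rw [hy, hq]
        rw [show π v = e.symm q from by rw [hq, e.symm_apply_apply]]
        rw [e.symm.dist_eq, e.apply_symm_apply]
      rw [this, hdqz]
    have := hkey2 y
    rw [hvy, hyn] at this
    norm_num at this
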